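/- Let μ ≥ 0 and let N(0,1) and N(μ,1) denote the Gaussian measures on ℝ with unit variance and means 0 and μ. Then for every randomized test φ : ℝ → [0,1], ∫ (1−φ) dN(μ,1) ≥ G_μ(∫ φ dN(0,1)); moreover, for every x ∈ (0,1), the deterministic threshold test φ = indicator of [Φ^{-1}(1−x), ∞) has type I error exactly x under N(0,1) and type II error exactly G_μ(x) under N(μ,1). In other words, the pair (N(0,1), N(μ,1)) satisfies the trade-off bound G_μ, and this bound is attained by threshold tests. -/

import Mathlib

open MeasureTheory ProbabilityTheory

/-- The pair `(P, P')` satisfies the trade-off bound `f` if every randomized test (a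
measurable `φ` with values in `[0,1]`) has type II error `∫ (1−φ) dP'` at least `f`
evaluated at its type I error `∫ φ dP`. -/
def SatisfiesTradeoff {Ω : Type*} [MeasurableSpace Ω] (P P' : Measure Ω)
    (f : ℝ → ℝ) : Prop :=
  ∀ φ : Ω → ℝ, Measurable φ → (∀ ω, φ ω ∈ Set.Icc (0 : ℝ) 1) →
    f (∫ ω, φ ω ∂P) ≤ ∫ ω, (1 - φ ω) ∂P'

/-- `Φ`, the CDF of the standard Gaussian measure `N(0,1)` on `ℝ`. -/
noncomputable def stdGaussianCDF (x : ℝ) : ℝ :=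
  ((ProbabilityTheory.gaussianReal 0 1) (Set.Iic x)).toReal

/-- `Φ⁻¹`, the inverse of the standard Gaussian CDF (on `(0,1)`). -/
noncomputable def stdGaussianCDFInv : ℝ → ℝ := Function.invFun stdGaussianCDF

/-- `G_μ(x) = Φ(Φ⁻¹(1−x) − μ)` for `x ∈ (0,1)`, with `G_μ(0) = 1` and `G_μ(1) = 0`
(so `G_0(x) = 1 − x` on `(0,1)`). -/
noncomputable def Gmu (μ : ℝ) (x : ℝ) : ℝ :=
  if x ≤ 0 then 1 else if 1 ≤ x then 0
  else stdGaussianCDF (stdGaussianCDFInv (1 - x) - μ)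

/-! The likelihood ratio of `N(μ,1)` against `N(0,1)` is `x ↦ exp (μ x - μ² / 2)`, increasing
for `μ ≥ 0`. Hence for the threshold test `ψ = 𝟙[t,∞)` and any test `φ`, the product
`(ψ - φ) (q - c p)` of densities is pointwise nonnegative with `c` the ratio at `t`; integrating,
`ψ` is at least as powerful as any `φ` of the same size (Neyman–Pearson). The Gaussian CDF `Φ` is
continuous with limits `0` and `1`, so `t = Φ⁻¹(1 - α)` gives `ψ` size exactly `α`, and its type II
error is `Φ(t - μ) = G_μ(α)`. -/

open Set Filter

lemma continuous_cdf (P : Measure ℝ) [IsProbabilityMeasure P] [NullSingletonClass P] :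
    Continuous (cdf P) := by
  refine continuous_iff_continuousAt.2 fun x => ?_
  rw [(monotone_cdf P).continuousAt_iff_leftLim_eq_rightLim, StieltjesFunction.rightLim_eq]
  have h := (cdf P).measure_singleton x
  rw [measure_cdf, measure_singleton, eq_comm, ENNReal.ofReal_eq_zero] at h
  exact le_antisymm ((monotone_cdf P).leftLim_le le_rfl) (by linarith)

lemma exists_cdf_eq (P : Measure ℝ) [IsProbabilityMeasure P] [NullSingletonClass P] {y : ℝ}
    (hy : y ∈ Ioo 0 1) : ∃ x, cdf P x = y :=
  mem_range_of_exists_le_of_exists_ge (continuous_cdf P)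
    ((tendsto_cdf_atBot P).eventually (eventually_le_nhds hy.1)).exists
    ((tendsto_cdf_atTop P).eventually (eventually_ge_nhds hy.2)).exists

instance (μ : ℝ) : NullSingletonClass (gaussianReal μ 1) :=
  nullSingletonClass_gaussianReal one_ne_zero

lemma cdf_gaussianReal (μ t : ℝ) : cdf (gaussianReal μ 1) t = stdGaussianCDF (t - μ) := by
  rw [cdf_eq_real, stdGaussianCDF, ← measureReal_def, ← zero_add μ, ← gaussianReal_map_add_const,
    map_measureReal_apply (measurable_add_const μ) measurableSet_Iic, preimage_add_const_Iic,
    zero_add]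

lemma stdGaussianCDF_stdGaussianCDFInv {y : ℝ} (hy : y ∈ Ioo 0 1) :
    stdGaussianCDF (stdGaussianCDFInv y) = y :=
  Function.invFun_eq <| (exists_cdf_eq (gaussianReal 0 1) hy).imp fun x hx => by
    rwa [cdf_gaussianReal, sub_zero] at hx

lemma norm_le_one_of_mem_Icc {x : ℝ} (hx : x ∈ Icc (0 : ℝ) 1) : ‖x‖ ≤ 1 :=
  (Real.norm_of_nonneg hx.1).trans_le hx.2

lemma integrable_of_mem_Icc {Ω : Type*} [MeasurableSpace Ω] {P : Measure Ω} [IsFiniteMeasure P]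
    {φ : Ω → ℝ} (hφm : Measurable φ) (hφ : ∀ ω, φ ω ∈ Icc (0 : ℝ) 1) : Integrable φ P :=
  .of_bound hφm.aestronglyMeasurable 1 <| ae_of_all _ fun ω => norm_le_one_of_mem_Icc (hφ ω)

lemma MeasureTheory.Integrable.mul_of_mem_Icc {Ω : Type*} [MeasurableSpace Ω] {ν : Measure Ω}
    {g φ : Ω → ℝ} (hg : Integrable g ν) (hφm : Measurable φ) (hφ : ∀ ω, φ ω ∈ Icc (0 : ℝ) 1) :
    Integrable (fun ω => g ω * φ ω) ν :=
  hg.mul_bdd hφm.aestronglyMeasurable <| ae_of_all _ fun ω => norm_le_one_of_mem_Icc (hφ ω)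

lemma integral_one_sub {Ω : Type*} [MeasurableSpace Ω] {P : Measure Ω} [IsProbabilityMeasure P]
    {φ : Ω → ℝ} (hφ : Integrable φ P) : ∫ ω, (1 - φ ω) ∂P = 1 - ∫ ω, φ ω ∂P := by
  rw [integral_sub (integrable_const 1) hφ, integral_const, probReal_univ, one_smul]

lemma integral_indicator_Ici (P : Measure ℝ) [IsProbabilityMeasure P] [NullSingletonClass P]
    (t : ℝ) : ∫ ω, (Ici t).indicator (fun _ => (1 : ℝ)) ω ∂P = 1 - cdf P t := by
  rw [integral_indicator_const _ measurableSet_Ici, smul_eq_mul, mul_one, ← compl_Iio,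
    probReal_compl_eq_one_sub measurableSet_Iio, cdf_eq_real, measureReal_def, measureReal_def,
    measure_congr Iio_ae_eq_Iic]

lemma integral_one_sub_indicator_Ici (P : Measure ℝ) [IsProbabilityMeasure P]
    [NullSingletonClass P] (t : ℝ) :
    ∫ ω, (1 - (Ici t).indicator (fun _ => (1 : ℝ)) ω) ∂P = cdf P t := by
  rw [integral_one_sub ((integrable_const 1).indicator measurableSet_Ici),
    integral_indicator_Ici, sub_sub_cancel]

lemma indicator_Ici_sub_mul_sub_nonneg {α : Type*} [LinearOrder α] {L : α → ℝ} (hL : Monotone L)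
    {φ : α → ℝ} (hφ : ∀ x, φ x ∈ Icc (0 : ℝ) 1) (t x : α) :
    0 ≤ ((Ici t).indicator (fun _ => (1 : ℝ)) x - φ x) * (L x - L t) := by
  rcases le_or_gt t x with htx | hxt
  · rw [indicator_of_mem (mem_Ici.2 htx)]
    exact mul_nonneg (sub_nonneg.2 (hφ x).2) (sub_nonneg.2 (hL htx))
  · rw [indicator_of_notMem (notMem_Ici.2 hxt)]
    exact mul_nonneg_of_nonpos_of_nonpos (by linarith [(hφ x).1]) (sub_nonpos.2 (hL hxt.le))

lemma integral_mul_le_of_neymanPearson {Ω : Type*} [MeasurableSpace Ω] {ν : Measure Ω}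
    {p q φ ψ : Ω → ℝ} (hp : Integrable p ν) (hq : Integrable q ν)
    (hφm : Measurable φ) (hφ : ∀ ω, φ ω ∈ Icc (0 : ℝ) 1)
    (hψm : Measurable ψ) (hψ : ∀ ω, ψ ω ∈ Icc (0 : ℝ) 1) (c : ℝ)
    (hsign : ∀ ω, 0 ≤ (ψ ω - φ ω) * (q ω - c * p ω))
    (hsize : ∫ ω, p ω * φ ω ∂ν = ∫ ω, p ω * ψ ω ∂ν) :
    ∫ ω, q ω * φ ω ∂ν ≤ ∫ ω, q ω * ψ ω ∂ν := by
  have hφp := hp.mul_of_mem_Icc hφm hφ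
  have hψp := hp.mul_of_mem_Icc hψm hψ
  have hφq := hq.mul_of_mem_Icc hφm hφ
  have hψq := hq.mul_of_mem_Icc hψm hψ
  have hq' : Integrable (fun ω => q ω * ψ ω - q ω * φ ω) ν := hψq.sub hφq
  have hp' : Integrable (fun ω => c * (p ω * ψ ω - p ω * φ ω)) ν := (hψp.sub hφp).const_mul c
  have h : 0 ≤ ∫ ω, (q ω * ψ ω - q ω * φ ω) - c * (p ω * ψ ω - p ω * φ ω) ∂ν :=
    integral_nonneg fun ω => (hsign ω).trans_eq (by ring)
  rw [integral_sub hq' hp', integral_const_mul, integral_sub hψq hφq, integral_sub hψp hφp,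
    hsize, sub_self, mul_zero, sub_zero, sub_nonneg] at h
  exact h

lemma gaussianPDFReal_eq_mul_exp (μ x : ℝ) :
    gaussianPDFReal μ 1 x = gaussianPDFReal 0 1 x * Real.exp (μ * x - μ ^ 2 / 2) := by
  simp only [gaussianPDFReal, NNReal.coe_one, mul_one, sub_zero, mul_assoc, ← Real.exp_add]
  ring_nf

lemma integral_le_integral_indicator_Ici_gaussianReal {μ : ℝ} (hμ : 0 ≤ μ) {φ : ℝ → ℝ}
    (hφm : Measurable φ) (hφ : ∀ ω, φ ω ∈ Icc (0 : ℝ) 1) (t : ℝ)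
    (hsize : ∫ ω, φ ω ∂gaussianReal 0 1 =
      ∫ ω, (Ici t).indicator (fun _ => (1 : ℝ)) ω ∂gaussianReal 0 1) :
    ∫ ω, φ ω ∂gaussianReal μ 1 ≤
      ∫ ω, (Ici t).indicator (fun _ => (1 : ℝ)) ω ∂gaussianReal μ 1 := by
  set L : ℝ → ℝ := fun x => Real.exp (μ * x - μ ^ 2 / 2)
  have hL : Monotone L := fun x y hxy =>
    Real.exp_le_exp.2 (by nlinarith [mul_le_mul_of_nonneg_left hxy hμ])
  simp only [integral_gaussianReal_eq_integral_smul one_ne_zero, smul_eq_mul] at hsize ⊢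
  refine integral_mul_le_of_neymanPearson (integrable_gaussianPDFReal 0 1)
    (integrable_gaussianPDFReal μ 1) hφm hφ (measurable_const.indicator measurableSet_Ici)
    (fun x => ?_) (L t) (fun x => ?_) hsize
  · by_cases hx : x ∈ Ici t <;> simp [hx]
  · rw [gaussianPDFReal_eq_mul_exp μ x, mul_comm (L t), ← mul_sub, mul_left_comm]
    exact mul_nonneg (gaussianPDFReal_nonneg 0 1 x) (indicator_Ici_sub_mul_sub_nonneg hL hφ t x)

lemma integral_indicator_Ici_stdGaussianCDFInv {x : ℝ} (hx : x ∈ Ioo (0 : ℝ) 1) :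
    ∫ ω, (Ici (stdGaussianCDFInv (1 - x))).indicator (fun _ => (1 : ℝ)) ω ∂gaussianReal 0 1 =
      x := by
  rw [integral_indicator_Ici, cdf_gaussianReal, sub_zero,
    stdGaussianCDF_stdGaussianCDFInv ⟨by linarith [hx.2], by linarith [hx.1]⟩, sub_sub_cancel]

lemma integral_one_sub_indicator_Ici_stdGaussianCDFInv (μ : ℝ) {x : ℝ} (hx : x ∈ Ioo (0 : ℝ) 1) :
    ∫ ω, (1 - (Ici (stdGaussianCDFInv (1 - x))).indicator (fun _ => (1 : ℝ)) ω)
      ∂gaussianReal μ 1 = Gmu μ x := by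
  rw [integral_one_sub_indicator_Ici, cdf_gaussianReal, Gmu, if_neg (not_le.2 hx.1),
    if_neg (not_le.2 hx.2)]

lemma integral_one_sub_eq_one_of_integral_eq_zero {Ω : Type*} [MeasurableSpace Ω]
    {P Q : Measure Ω} [IsProbabilityMeasure P] [IsProbabilityMeasure Q] (hQP : Q ≪ P)
    {φ : Ω → ℝ} (hφm : Measurable φ) (hφ : ∀ ω, φ ω ∈ Icc (0 : ℝ) 1)
    (h : ∫ ω, φ ω ∂P = 0) : ∫ ω, (1 - φ ω) ∂Q = 1 := by
  have hφP : φ =ᵐ[P] 0 := (integral_eq_zero_iff_of_nonneg (fun ω => (hφ ω).1)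
    (integrable_of_mem_Icc hφm hφ)).1 h
  rw [integral_one_sub (integrable_of_mem_Icc hφm hφ), integral_congr_ae (hQP.ae_le hφP),
    Pi.zero_def, integral_zero, sub_zero]

theorem satisfiesTradeoff_gaussianReal {μ : ℝ} (hμ : 0 ≤ μ) :
    SatisfiesTradeoff (gaussianReal 0 1) (gaussianReal μ 1) (Gmu μ) := by
  intro φ hφm hφ
  set α := ∫ ω, φ ω ∂gaussianReal 0 1
  rcases le_or_gt α 0 with hα0 | hα0
  · have hac : gaussianReal μ 1 ≪ gaussianReal 0 1 :=
      (gaussianReal_absolutelyContinuous μ one_ne_zero).trans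
        (gaussianReal_absolutelyContinuous' 0 one_ne_zero)
    rw [Gmu, if_pos hα0, integral_one_sub_eq_one_of_integral_eq_zero hac hφm hφ
      (le_antisymm hα0 (integral_nonneg fun ω => (hφ ω).1))]
  rcases le_or_gt 1 α with hα1 | hα1
  · rw [Gmu, if_neg (not_le.2 hα0), if_pos hα1]
    exact integral_nonneg fun ω => sub_nonneg.2 (hφ ω).2
  have hα : α ∈ Ioo (0 : ℝ) 1 := ⟨hα0, hα1⟩
  have hNP := integral_le_integral_indicator_Ici_gaussianReal hμ hφm hφ
    (stdGaussianCDFInv (1 - α)) (integral_indicator_Ici_stdGaussianCDFInv hα).symm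
  rw [← integral_one_sub_indicator_Ici_stdGaussianCDFInv μ hα,
    integral_one_sub ((integrable_const 1).indicator measurableSet_Ici),
    integral_one_sub (integrable_of_mem_Icc hφm hφ)]
  linarith

/-- Neyman–Pearson for Gaussians: for `μ ≥ 0`, the pair
`(N(0,1), N(μ,1))` satisfies the trade-off bound `G_μ`, and for every `x ∈ (0,1)` the
deterministic threshold test `φ = 𝟙_{[Φ⁻¹(1−x), ∞)}` has type I error exactly `x`
under `N(0,1)` and type II error exactly `G_μ(x)` under `N(μ,1)`. -/
theorem stmt_14 (μ : ℝ) (hμ : 0 ≤ μ) :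
    SatisfiesTradeoff (gaussianReal 0 1) (gaussianReal μ 1) (Gmu μ) ∧
      ∀ x ∈ Set.Ioo (0 : ℝ) 1,
        (∫ ω, (Set.Ici (stdGaussianCDFInv (1 - x))).indicator
            (fun _ => (1 : ℝ)) ω ∂(gaussianReal 0 1)) = x ∧
        (∫ ω, (1 - (Set.Ici (stdGaussianCDFInv (1 - x))).indicator
            (fun _ => (1 : ℝ)) ω) ∂(gaussianReal μ 1)) = Gmu μ x :=
  ⟨satisfiesTradeoff_gaussianReal hμ, fun _ hx =>
    ⟨integral_indicator_Ici_stdGaussianCDFInv hx,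
      integral_one_sub_indicator_Ici_stdGaussianCDFInv μ hx⟩⟩
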